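/- arXiv:math/0011209 — 6 statements merged into one kernel-verified Lean document; each statement's English description precedes it below -/
import Mathlib

section
/- Let L be a complete lattice. The set DI(L) of distributive ideals of L, ordered by inclusion, is a frame (complete Heyting algebra): the infimum of any family of distributive ideals is their intersection, the supremum of a family {A_i} is 𝒞(⋃_i A_i), and for every distributive ideal A and every family {B_i} of distributive ideals one has A ∩ 𝒞(⋃_i B_i) = 𝒞(⋃_i (A ∩ B_i)). -/
/-- A subset `S` of a complete lattice is *distributive* if
`a ⊓ sSup S = ⨆ s ∈ S, a ⊓ s` for every `a`. -/
def IsDistrib {L : Type*} [CompleteLattice L] (S : Set L) : Prop :=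
  ∀ a : L, a ⊓ sSup S = ⨆ s ∈ S, a ⊓ s

/-- A *distributive ideal* is a lower set closed under suprema of its
distributive subsets. -/
def IsDistribIdeal {L : Type*} [CompleteLattice L] (I : Set L) : Prop :=
  IsLowerSet I ∧ ∀ S : Set L, S ⊆ I → IsDistrib S → sSup S ∈ I

/-- The lower set `↓A` generated by `A`. -/
def downSet {L : Type*} [CompleteLattice L] (A : Set L) : Set L :=
  {x | ∃ a ∈ A, x ≤ a}

/-- The closure `𝒞(A) = { sSup B | B ⊆ ↓A, B distributive }`. -/
def distClosure {L : Type*} [CompleteLattice L] (A : Set L) : Set L :=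
  {x | ∃ B : Set L, B ⊆ downSet A ∧ IsDistrib B ∧ x = sSup B}

section Aux

variable {L : Type*} [CompleteLattice L]

lemma isDistrib_singleton (a : L) : IsDistrib ({a} : Set L) := by
  intro c; simp

lemma downSet_isLowerSet (A : Set L) : IsLowerSet (downSet A) := by
  rintro x y hle ⟨a, ha, hxa⟩
  exact ⟨a, ha, hle.trans hxa⟩

lemma subset_downSet (A : Set L) : A ⊆ downSet A :=
  fun a ha => ⟨a, ha, le_rfl⟩

lemma downSet_mono {A B : Set L} (h : A ⊆ B) : downSet A ⊆ downSet B := by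
  rintro x ⟨a, ha, hxa⟩; exact ⟨a, h ha, hxa⟩

lemma downSet_of_lower {A : Set L} (h : IsLowerSet A) : downSet A = A := by
  apply subset_antisymm _ (subset_downSet A)
  rintro x ⟨a, ha, hxa⟩; exact h hxa ha

lemma sSup_image_inf {B : Set L} (hB : IsDistrib B) (y : L) :
    sSup ((fun b => y ⊓ b) '' B) = y ⊓ sSup B := by
  rw [sSup_image]; exact (hB y).symm

lemma isDistrib_image_inf {B : Set L} (hB : IsDistrib B) (y : L) :
    IsDistrib ((fun b => y ⊓ b) '' B) := by
  intro c
  rw [sSup_image_inf hB y, ← inf_assoc, hB (c ⊓ y), iSup_image]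
  simp [inf_assoc]

lemma distClosure_isDistribIdeal (A : Set L) : IsDistribIdeal (distClosure A) := by
  constructor
  · rintro x y hle ⟨B, hBA, hBd, rfl⟩
    refine ⟨(fun b => y ⊓ b) '' B, ?_, isDistrib_image_inf hBd y, ?_⟩
    · rintro z ⟨b, hb, rfl⟩
      exact downSet_isLowerSet A inf_le_right (hBA hb)
    · rw [sSup_image_inf hBd y, inf_eq_left.mpr hle]
  · intro S hS hSd
    choose f hsub hd heq using fun s : S => hS s.2
    refine ⟨⋃ s : S, f s, Set.iUnion_subset hsub, ?_, ?_⟩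
    · have hsup : sSup (⋃ s : S, f s) = sSup S := by
        rw [sSup_iUnion, sSup_eq_iSup']
        exact iSup_congr fun s => (heq s).symm
      intro c
      rw [hsup, hSd c, iSup_iUnion, iSup_subtype']
      refine iSup_congr fun s => ?_
      rw [heq s]
      exact hd s c
    · rw [sSup_iUnion, sSup_eq_iSup']
      exact (iSup_congr fun s => (heq s).symm).symm

end Aux

/-- `DI(L)` ordered by inclusion is a frame: infima of families of distributive
ideals are intersections, the supremum of a family `{A_i}` is `𝒞(⋃ i, A i)`
(the least distributive ideal containing every `A i`), and binary meets
distribute over arbitrary suprema. -/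
theorem DI_is_frame {L : Type*} [CompleteLattice L] {ι : Type*} :
    (∀ A : ι → Set L, (∀ i, IsDistribIdeal (A i)) → IsDistribIdeal (⋂ i, A i)) ∧
    (∀ A : ι → Set L, (∀ i, IsDistribIdeal (A i)) →
      IsDistribIdeal (distClosure (⋃ i, A i)) ∧
      (∀ i, A i ⊆ distClosure (⋃ i, A i)) ∧
      (∀ J : Set L, IsDistribIdeal J → (∀ i, A i ⊆ J) →
        distClosure (⋃ i, A i) ⊆ J)) ∧
    (∀ (A : Set L) (B : ι → Set L), IsDistribIdeal A → (∀ i, IsDistribIdeal (B i)) →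
      A ∩ distClosure (⋃ i, B i) = distClosure (⋃ i, A ∩ B i)) := by
  refine ⟨?_, ?_, ?_⟩
  · intro A hA
    constructor
    · exact isLowerSet_iInter fun i => (hA i).1
    · intro S hS hSd
      exact Set.mem_iInter.mpr fun i => (hA i).2 S
        (hS.trans (Set.iInter_subset _ i)) hSd
  · intro A hA
    refine ⟨distClosure_isDistribIdeal _, ?_, ?_⟩
    · intro i a ha
      exact ⟨{a}, Set.singleton_subset_iff.mpr
        (subset_downSet _ (Set.mem_iUnion.mpr ⟨i, ha⟩)),
        isDistrib_singleton a, sSup_singleton.symm⟩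
    · intro J hJ hAJ
      rintro x ⟨B, hBsub, hBd, rfl⟩
      refine hJ.2 B ?_ hBd
      have : downSet (⋃ i, A i) ⊆ J := by
        rw [← downSet_of_lower hJ.1]
        exact downSet_mono (Set.iUnion_subset hAJ)
      exact hBsub.trans this
  · intro A B hA hB
    have hUlow : IsLowerSet (⋃ i, B i) := isLowerSet_iUnion fun i => (hB i).1
    apply subset_antisymm
    · rintro x ⟨hxA, C, hCsub, hCd, rfl⟩
      have hCU : C ⊆ ⋃ i, B i := by rwa [downSet_of_lower hUlow] at hCsub
      refine ⟨(fun c => sSup C ⊓ c) '' C, ?_, isDistrib_image_inf hCd _, ?_⟩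
      · rintro z ⟨c, hc, rfl⟩
        obtain ⟨i, hi⟩ := Set.mem_iUnion.mp (hCU hc)
        exact subset_downSet _ (Set.mem_iUnion.mpr
          ⟨i, hA.1 inf_le_left hxA, (hB i).1 inf_le_right hi⟩)
      · rw [sSup_image_inf hCd, inf_idem]
    · rintro x ⟨C, hCsub, hCd, rfl⟩
      have hCU : C ⊆ ⋃ i, A ∩ B i := by
        rwa [downSet_of_lower (isLowerSet_iUnion fun i =>
          hA.1.inter (hB i).1)] at hCsub
      constructor
      · refine hA.2 C ?_ hCd
        intro c hc
        obtain ⟨i, hi, _⟩ := Set.mem_iUnion.mp (hCU hc)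
        exact hi
      · refine ⟨C, ?_, hCd, rfl⟩
        refine hCU.trans ?_
        refine (Set.iUnion_mono fun i => Set.inter_subset_right).trans
          (subset_downSet _)
end

section
/- Let L₁ and L₂ be complete lattices and let g : 𝒫(L₁) → 𝒫(L₂) preserve arbitrary unions and satisfy: for all X, Y ⊆ L₁, if sSup X = sSup Y then sSup (g(X)) = sSup (g(Y)). Then for all distributive ideals A, B ∈ DI(L₁), if ↓(sSup A) = ↓(sSup B) then ↓(sSup 𝒞₂(g(A))) = ↓(sSup 𝒞₂(g(B))); i.e. the map A ↦ 𝒞₂(g(A)) is compatible with the operational resolutions ℛ_i(A) = ↓(sSup A) on DI(L₁) and DI(L₂). -/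
lemma sSup_distClosure {L : Type*} [CompleteLattice L] (S : Set L) :
    sSup (distClosure S) = sSup S := by
  apply le_antisymm
  · apply sSup_le
    rintro x ⟨B, hB, _, rfl⟩
    apply sSup_le
    intro b hb
    obtain ⟨a, ha, hba⟩ := hB hb
    exact hba.trans (le_sSup ha)
  · apply sSup_le
    intro x hx
    refine le_sSup ⟨{x}, ?_, ?_, by simp⟩
    · intro y hy; exact ⟨x, hx, by simp_all⟩
    · intro a; simp

/-- If `g : 𝒫(L₁) → 𝒫(L₂)` preserves arbitrary unions and is compatible with
suprema, then `A ↦ 𝒞₂(g A)` is compatible with the operational resolutions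
`ℛᵢ(A) = ↓(sSup A)` on distributive ideals. -/
theorem F_compatible_with_opRes {L₁ : Type*} {L₂ : Type*}
    [CompleteLattice L₁] [CompleteLattice L₂]
    (g : Set L₁ → Set L₂)
    (hg : ∀ 𝒳 : Set (Set L₁), g (⋃₀ 𝒳) = ⋃ X ∈ 𝒳, g X)
    (hcomp : ∀ X Y : Set L₁, sSup X = sSup Y → sSup (g X) = sSup (g Y))
    (A B : Set L₁) (hA : IsDistribIdeal A) (hB : IsDistribIdeal B)
    (hAB : Set.Iic (sSup A) = Set.Iic (sSup B)) :
    Set.Iic (sSup (distClosure (g A))) = Set.Iic (sSup (distClosure (g B))) := by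
  have h1 : sSup A = sSup B := by
    have ha : sSup A ∈ Set.Iic (sSup B) := hAB ▸ Set.mem_Iic.mpr le_rfl
    have hb : sSup B ∈ Set.Iic (sSup A) := hAB.symm ▸ Set.mem_Iic.mpr le_rfl
    exact le_antisymm ha hb
  rw [sSup_distClosure, sSup_distClosure, hcomp A B h1]
end

section
/- Let L₁ and L₂ be complete lattices and let g : 𝒫(L₁) → 𝒫(L₂) preserve arbitrary unions and satisfy: for all X, Y ⊆ L₁, if sSup X = sSup Y then sSup (g(X)) = sSup (g(Y)). Then the map H(g) : L₁ → L₂ defined by H(g)(a) := sSup (g(↓a)) preserves arbitrary suprema: H(g)(sSup S) = ⨆_{a ∈ S} H(g)(a) for every S ⊆ L₁. -/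
/-- If `g : 𝒫(L₁) → 𝒫(L₂)` preserves arbitrary unions and satisfies
`sSup X = sSup Y → sSup (g X) = sSup (g Y)`, then
`H(g) : a ↦ sSup (g ↓a)` preserves arbitrary suprema. -/
theorem Hg_preserves_sSup {L₁ : Type*} {L₂ : Type*}
    [CompleteLattice L₁] [CompleteLattice L₂]
    (g : Set L₁ → Set L₂)
    (hg : ∀ 𝒳 : Set (Set L₁), g (⋃₀ 𝒳) = ⋃ X ∈ 𝒳, g X)
    (hcomp : ∀ X Y : Set L₁, sSup X = sSup Y → sSup (g X) = sSup (g Y))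
    (S : Set L₁) :
    sSup (g (Set.Iic (sSup S))) = ⨆ a ∈ S, sSup (g (Set.Iic a)) := by
  have h1 : sSup (Set.Iic (sSup S)) = sSup (⋃₀ (Set.Iic '' S)) := by
    rw [csSup_Iic, Set.sUnion_image, sSup_iUnion]
    simp only [sSup_iUnion, csSup_Iic]
    exact sSup_eq_iSup
  rw [hcomp _ _ h1, hg, Set.biUnion_image, sSup_iUnion]
  simp only [sSup_iUnion]
end

section
/- Let L₁, L₂, L₃ be complete lattices and let g₁ : 𝒫(L₁) → 𝒫(L₂) and g₂ : 𝒫(L₂) → 𝒫(L₃) each preserve arbitrary unions and each satisfy the compatibility condition (sSup X = sSup Y implies sSup (gᵢ(X)) = sSup (gᵢ(Y))). Then the assignment H(g)(a) := sSup (g(↓a)) is functorial: for every a ∈ L₁, sSup (g₂(g₁(↓a))) = sSup (g₂(↓(sSup (g₁(↓a))))), i.e. H(g₂ ∘ g₁) = H(g₂) ∘ H(g₁). -/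
/-- The assignment `H(g)(a) := sSup (g ↓a)` is functorial:
`H(g₂ ∘ g₁) = H(g₂) ∘ H(g₁)` for union-preserving maps compatible with
suprema. -/
theorem Hg_functorial {L₁ : Type*} {L₂ : Type*} {L₃ : Type*}
    [CompleteLattice L₁] [CompleteLattice L₂] [CompleteLattice L₃]
    (g₁ : Set L₁ → Set L₂) (g₂ : Set L₂ → Set L₃)
    (hg₁ : ∀ 𝒳 : Set (Set L₁), g₁ (⋃₀ 𝒳) = ⋃ X ∈ 𝒳, g₁ X)
    (hg₂ : ∀ 𝒳 : Set (Set L₂), g₂ (⋃₀ 𝒳) = ⋃ X ∈ 𝒳, g₂ X)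
    (hcomp₁ : ∀ X Y : Set L₁, sSup X = sSup Y → sSup (g₁ X) = sSup (g₁ Y))
    (hcomp₂ : ∀ X Y : Set L₂, sSup X = sSup Y → sSup (g₂ X) = sSup (g₂ Y))
    (a : L₁) :
    sSup (g₂ (g₁ (Set.Iic a))) =
      sSup (g₂ (Set.Iic (sSup (g₁ (Set.Iic a))))) := by
  exact hcomp₂ _ _ (by simp)
end

section
/- Let E be a complex Hilbert space, a a subspace of E, and b a closed subspace of E. Then a ≤ φ_b(a) ⊔ φ_{bᗮ}(a), i.e. a ≤ (b ⊓ (a ⊔ bᗮ)) ⊔ (bᗮ ⊓ (a ⊔ b)); thus in a perfect measurement with eigenproperties b and bᗮ, actuality of a guarantees actuality of the join of the two Sasaki projections of a. -/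
/-- In a complex Hilbert space, for a subspace `a` and a closed subspace `b`,
`a ≤ φ_b(a) ⊔ φ_{bᗮ}(a)`: actuality of `a` guarantees actuality of the join of
the two Sasaki projections of `a` in a perfect measurement with
eigenproperties `b` and `bᗮ`. -/
theorem le_sup_sasaki
    {E : Type*} [NormedAddCommGroup E] [InnerProductSpace ℂ E] [CompleteSpace E]
    (a b : Submodule ℂ E) (hb : IsClosed (b : Set E)) :
    a ≤ (b ⊓ (a ⊔ bᗮ)) ⊔ (bᗮ ⊓ (a ⊔ b)) := by
  intro x hx
  haveI : CompleteSpace b := hb.completeSpace_coe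
  obtain ⟨y, hy, z, hz, hxyz⟩ := b.exists_add_mem_mem_orthogonal x
  have hy' : y ∈ a ⊔ bᗮ := by
    have : y = x - z := by rw [hxyz]; abel
    rw [this]
    exact Submodule.sub_mem _ (Submodule.mem_sup_left hx) (Submodule.mem_sup_right hz)
  have hz' : z ∈ a ⊔ b := by
    have : z = x - y := by rw [hxyz]; abel
    rw [this]
    exact Submodule.sub_mem _ (Submodule.mem_sup_left hx) (Submodule.mem_sup_right hy)
  rw [hxyz]
  exact Submodule.add_mem _ (Submodule.mem_sup_left ⟨hy, hy'⟩)
    (Submodule.mem_sup_right ⟨hz, hz'⟩)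
end

section
/- Let E be a complex Hilbert space, a a subspace of E, and b a closed subspace of E. If the Sasaki projection of a onto bᗮ is trivial, i.e. bᗮ ⊓ (a ⊔ b) = ⊥, then a ≤ b. (In a perfect measurement with eigenproperties b and bᗮ, if one alternative outcome is the impossible property 0, the outcome is determined.) -/
theorem Submodule.le_of_orthogonal_inf_sup_eq_bot {𝕜 E : Type*} [RCLike 𝕜]
    [NormedAddCommGroup E] [InnerProductSpace 𝕜 E] {a b : Submodule 𝕜 E}
    [b.HasOrthogonalProjection] (h : bᗮ ⊓ (a ⊔ b) = ⊥) : a ≤ b := by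
  have hsup : b ⊔ bᗮ ⊓ (a ⊔ b) = a ⊔ b :=
    Submodule.sup_orthogonal_inf_of_hasOrthogonalProjection le_sup_right
  rw [h, sup_bot_eq] at hsup
  exact hsup ▸ le_sup_left

/-- In a complex Hilbert space, for a subspace `a` and a closed subspace `b`,
if the Sasaki projection of `a` onto `bᗮ` is trivial, `bᗮ ⊓ (a ⊔ b) = ⊥`,
then `a ≤ b`: if one alternative outcome of a perfect measurement is the
impossible property `0`, the outcome is determined. -/
theorem sasaki_eq_bot_imp_le
    {E : Type*} [NormedAddCommGroup E] [InnerProductSpace ℂ E] [CompleteSpace E]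
    (a b : Submodule ℂ E) (hb : IsClosed (b : Set E))
    (h : bᗮ ⊓ (a ⊔ b) = ⊥) : a ≤ b := by
  have : CompleteSpace b := hb.completeSpace_coe
  exact Submodule.le_of_orthogonal_inf_sup_eq_bot h
end
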